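/- Let M ≥ 1 and let f be nondecreasing with f(x) ≤ x. Suppose for each nonzero integer n with |n| = r, there is a path of length at most M·r^{m−2}·(f(Mr)+1) connecting a₀^{4n} and a_m·a₀^{4n} outside the ball B(e, 2r) in a Cayley graph where additionally |a_m^i a₀^j| = |i| + |j| for all integers i, j with appropriate signs. Then for nonzero integers n₁, n₂, r with |n₁| = |n₂| = r and n₂ > 0, concatenating r translated copies of such paths together with segments labeled a₀^{3n₁} (length 3r) and a₀^{−4n₁} (length 4r) yields a path connecting a₀^{n₁} and a_m^{n₂} outside B(e, r) of length at most r·M·(2r)^{m−2}·(f(2Mr)+1) + 7r. -/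

import Mathlib

/-- Word length of `g` with respect to the generating set `S`: the least length of a word
in `S ∪ S⁻¹` representing `g`. -/
noncomputable def wordLength {G : Type*} [Group G] (S : Set G) (g : G) : ℕ :=
  sInf {n | ∃ l : List G, (∀ x ∈ l, x ∈ S ∨ x⁻¹ ∈ S) ∧ l.prod = g ∧ l.length = n}

/-- Adjacency in the Cayley graph of `(G, S)`. -/
def CayleyAdj {G : Type*} [Group G] (S : Set G) (x y : G) : Prop :=
  ∃ s : G, (s ∈ S ∨ s⁻¹ ∈ S) ∧ y = x * s

/-!
Since `|a_m^k| = k`, left translation by `a_m^k` with `k < r` is a graph automorphism carrying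
the complement of `B(e, 2r)` into the complement of `B(e, r)`. Hence the `r` translates of the
given path from `a₀^{4n₁}` to `a_m a₀^{4n₁}` by `1, a_m, …, a_m^{r-1}` concatenate to a path from
`a₀^{4n₁}` to `a_m^r a₀^{4n₁}` outside `B(e, r)`. The straight segments from `a₀^{n₁}` to
`a₀^{4n₁}` and from `a_m^r a₀^{4n₁}` to `a_m^r` stay outside `B(e, r)` because
`|a_m^i a₀^j| = |i| + |j|`, and they add `3r + 4r` edges. Finally `r^{m-2} ≤ (2r)^{m-2}` and
`f(Mr) ≤ f(2Mr)`.
-/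

section Cayley

variable {G : Type*} [Group G] {S : Set G}

theorem exists_word_of_closure_eq_top (hgen : Subgroup.closure S = ⊤) (g : G) :
    ∃ l : List G, (∀ x ∈ l, x ∈ S ∨ x⁻¹ ∈ S) ∧ l.prod = g := by
  have hg : g ∈ (Subgroup.closure S).toSubmonoid := by simp [hgen]
  rw [Subgroup.closure_toSubmonoid] at hg
  simpa using Submonoid.exists_list_of_mem_closure hg

theorem exists_word_length_eq_wordLength (hgen : Subgroup.closure S = ⊤) (g : G) :
    ∃ l : List G, (∀ x ∈ l, x ∈ S ∨ x⁻¹ ∈ S) ∧ l.prod = g ∧ l.length = wordLength S g :=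
  let ⟨l, hl, hprod⟩ := exists_word_of_closure_eq_top hgen g
  Nat.sInf_mem (s := {n | ∃ l : List G, (∀ x ∈ l, x ∈ S ∨ x⁻¹ ∈ S) ∧ l.prod = g ∧ l.length = n})
    ⟨l.length, l, hl, hprod, rfl⟩

theorem wordLength_mul_le (hgen : Subgroup.closure S = ⊤) (a b : G) :
    wordLength S (a * b) ≤ wordLength S a + wordLength S b := by
  obtain ⟨la, hla, rfl, hlena⟩ := exists_word_length_eq_wordLength hgen a
  obtain ⟨lb, hlb, rfl, hlenb⟩ := exists_word_length_eq_wordLength hgen b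
  rw [← hlena, ← hlenb, ← List.length_append]
  refine Nat.sInf_le ⟨la ++ lb, ?_, List.prod_append, rfl⟩
  simpa only [List.mem_append, or_imp, forall_and] using ⟨hla, hlb⟩

theorem wordLength_le_add_wordLength_mul (hgen : Subgroup.closure S = ⊤) (g x : G) :
    wordLength S x ≤ wordLength S g⁻¹ + wordLength S (g * x) := by
  simpa using wordLength_mul_le hgen g⁻¹ (g * x)

-- A path is given by its list of vertices, so it has `l.length - 1` edges.
def IsCayleyPathOutside (S : Set G) (R : ℕ) (x y : G) (l : List G) : Prop :=
  l.IsChain (CayleyAdj S) ∧ l.head? = some x ∧ l.getLast? = some y ∧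
    ∀ z ∈ l, R ≤ wordLength S z

namespace IsCayleyPathOutside

variable {R : ℕ} {x y z : G} {l l₁ l₂ : List G}

theorem ne_nil (h : IsCayleyPathOutside S R x y l) : l ≠ [] := by
  rintro rfl
  simp [IsCayleyPathOutside] at h

theorem cast_length_sub_one (h : IsCayleyPathOutside S R x y l) :
    ((l.length - 1 : ℕ) : ℝ) = l.length - 1 :=
  Nat.cast_pred (List.length_pos_iff.mpr h.ne_nil)

theorem singleton (hx : R ≤ wordLength S x) : IsCayleyPathOutside S R x x [x] := by
  simpa [IsCayleyPathOutside, List.isChain_singleton] using hx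

theorem append (h₁ : IsCayleyPathOutside S R x y l₁) (h₂ : IsCayleyPathOutside S R y z l₂) :
    IsCayleyPathOutside S R x z (l₁ ++ l₂.tail) := by
  obtain ⟨hc₁, hx₁, hy₁, hR₁⟩ := h₁
  obtain ⟨hc₂, hy₂, hz₂, hR₂⟩ := h₂
  obtain ⟨t, rfl⟩ : ∃ t, l₂ = y :: t := ⟨l₂.tail, (List.eq_cons_of_mem_head? hy₂)⟩
  refine ⟨hc₁.append hc₂.tail ?_, by simp [List.head?_append, hx₁], ?_, ?_⟩
  · intro a ha b hb
    obtain rfl : y = a := by simpa [hy₁] using ha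
    exact hc₂.rel_head? hb
  · cases t with
    | nil => simpa [hy₁] using hz₂
    | cons b t => simpa [List.getLast?_append] using hz₂
  · simp only [List.tail_cons, List.mem_append]
    rintro w (hw | hw)
    exacts [hR₁ w hw, hR₂ w (List.mem_cons_of_mem y hw)]

theorem length_append (h₁ : IsCayleyPathOutside S R x y l₁) :
    (l₁ ++ l₂.tail).length - 1 = (l₁.length - 1) + (l₂.length - 1) := by
  have := List.length_pos_iff.mpr h₁.ne_nil
  simp only [List.length_append, List.length_tail]
  omega

end IsCayleyPathOutside

variable {R : ℕ} {x y : G}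

theorem IsCayleyPathOutside.map_mul_left (hgen : Subgroup.closure S = ⊤) {l : List G}
    (h : IsCayleyPathOutside S R x y l) (g : G) {R' : ℕ} (hg : wordLength S g⁻¹ + R' ≤ R) :
    IsCayleyPathOutside S R' (g * x) (g * y) (l.map (g * ·)) := by
  obtain ⟨hc, hx, hy, hR⟩ := h
  refine ⟨?_, by simp [hx], by simp [hy], ?_⟩
  · refine List.isChain_map _ |>.mpr (hc.imp ?_)
    rintro a _ ⟨s, hs, rfl⟩
    exact ⟨s, hs, (mul_assoc g a s).symm⟩
  · simp only [List.mem_map]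
    rintro _ ⟨z, hz, rfl⟩
    have := wordLength_le_add_wordLength_mul hgen g z
    have := hR z hz
    omega

theorem isCayleyPathOutside_mul_pow {c : G} (hc : c ∈ S ∨ c⁻¹ ∈ S) (g : G) (N : ℕ)
    (hR : ∀ j ≤ N, R ≤ wordLength S (g * c ^ j)) :
    IsCayleyPathOutside S R g (g * c ^ N) ((List.range (N + 1)).map (g * c ^ ·)) := by
  refine ⟨?_, ?_, ?_, ?_⟩
  · refine List.isChain_map _ |>.mpr (List.isChain_range_succ _ _ |>.mpr fun j _ => ?_)
    exact ⟨c, hc, by rw [pow_succ, mul_assoc]⟩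
  · simp [List.range_succ_eq_map]
  · simp [List.range_succ]
  · simp only [List.mem_map, List.mem_range]
    rintro _ ⟨j, hj, rfl⟩
    exact hR j (Nat.lt_succ_iff.mp hj)

theorem exists_isCayleyPathOutside_pow_mul (hgen : Subgroup.closure S = ⊤) {a : G}
    {p : List G} (hp : IsCayleyPathOutside S R x (a * x) p) {R' : ℕ} (hR : R' ≤ R) (k : ℕ)
    (hk : ∀ i < k, wordLength S (a ^ i)⁻¹ + R' ≤ R) :
    ∃ l, IsCayleyPathOutside S R' x (a ^ k * x) l ∧ l.length - 1 = k * (p.length - 1) := by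
  induction k with
  | zero =>
    have hx : x ∈ p := List.mem_of_mem_head? hp.2.1
    exact ⟨[x], by simpa using IsCayleyPathOutside.singleton (hR.trans (hp.2.2.2 x hx)), by simp⟩
  | succ k ih =>
    obtain ⟨l, hl, hlen⟩ := ih fun i hi => hk i (Nat.lt_succ_of_lt hi)
    have hq := hp.map_mul_left hgen (a ^ k) (hk k k.lt_succ_self)
    rw [← mul_assoc, ← pow_succ] at hq
    refine ⟨l ++ (p.map (a ^ k * ·)).tail, hl.append hq, ?_⟩
    rw [hl.length_append, hlen, List.length_map, Nat.succ_mul]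

theorem exists_isCayleyPathOutside_mul_zpow {a : G} (ha : a ∈ S) (g : G) (i j : ℤ)
    (hR : ∀ k ∈ Set.uIcc i j, R ≤ wordLength S (g * a ^ k)) :
    ∃ l, IsCayleyPathOutside S R (g * a ^ i) (g * a ^ j) l ∧ l.length - 1 = (j - i).natAbs := by
  obtain ⟨s, hc, hmem, hend⟩ : ∃ s : ℤ, (a ^ s ∈ S ∨ (a ^ s)⁻¹ ∈ S) ∧
      (∀ t ≤ (j - i).natAbs, i + s * t ∈ Set.uIcc i j) ∧ i + s * (j - i).natAbs = j := by
    by_cases hij : i ≤ j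
    · exact ⟨1, by simp [ha], fun t ht => by rw [Set.mem_uIcc]; omega, by omega⟩
    · exact ⟨-1, by simp [ha], fun t ht => by rw [Set.mem_uIcc]; omega, by omega⟩
  have hpow (t : ℕ) : g * a ^ i * (a ^ s) ^ t = g * a ^ (i + s * t) := by
    rw [← zpow_natCast, ← zpow_mul, mul_assoc, ← zpow_add]
  have h := isCayleyPathOutside_mul_pow hc (g * a ^ i) (j - i).natAbs
    fun t ht => hpow t ▸ hR _ (hmem t ht)
  rw [hpow, hend] at h
  exact ⟨_, h, by simp⟩

end Cayley

theorem mul_pow_mul_le_two_mul {f : ℝ → ℝ} (hfmono : ∀ x y : ℝ, 0 < x → x ≤ y → f x ≤ f y)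
    {M r : ℝ} (hM : 0 < M) (hr : 0 < r) (n : ℕ) (h : 0 ≤ M * r ^ n * (f (M * r) + 1)) :
    M * r ^ n * (f (M * r) + 1) ≤ M * (2 * r) ^ n * (f (2 * M * r) + 1) := by
  have hf : 0 ≤ f (M * r) + 1 := nonneg_of_mul_nonneg_right h (by positivity)
  gcongr M * ?_ ^ n * (?_ + 1)
  · linarith
  · exact hfmono _ _ (by positivity) (by nlinarith [mul_pos hM hr])

theorem P_implies_Q_general {G : Type*} [Group G]
    (S : Set G) (hgen : Subgroup.closure S = ⊤)
    (a₀ aₘ : G) (ha₀ : a₀ ∈ S)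
    (m : ℕ) (M : ℝ) (hM : 1 ≤ M)
    (f : ℝ → ℝ) (hfmono : ∀ x y : ℝ, 0 < x → x ≤ y → f x ≤ f y)
    (hlcool : ∀ i j : ℤ, wordLength S (aₘ ^ i * a₀ ^ j) = i.natAbs + j.natAbs)
    (hP : ∀ n : ℤ, n ≠ 0 →
      ∃ l : List G, l.Chain' (CayleyAdj S) ∧
        l.head? = some (a₀ ^ (4 * n)) ∧ l.getLast? = some (aₘ * a₀ ^ (4 * n)) ∧
        (∀ x ∈ l, 2 * n.natAbs ≤ wordLength S x) ∧
        ((l.length : ℝ) - 1 ≤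
          M * (n.natAbs : ℝ) ^ (m - 2) * (f (M * n.natAbs) + 1))) :
    ∀ n₁ n₂ : ℤ, n₁ ≠ 0 → 0 < n₂ → n₁.natAbs = n₂.natAbs →
      ∃ l : List G, l.Chain' (CayleyAdj S) ∧
        l.head? = some (a₀ ^ n₁) ∧ l.getLast? = some (aₘ ^ n₂) ∧
        (∀ x ∈ l, n₂.natAbs ≤ wordLength S x) ∧
        ((l.length : ℝ) - 1 ≤
          (n₂.natAbs : ℝ) * M * (2 * (n₂.natAbs : ℝ)) ^ (m - 2) *
            (f (2 * M * n₂.natAbs) + 1) + 7 * (n₂.natAbs : ℝ)) := by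
  intro n₁ n₂ hn₁ hn₂ hr
  set r := n₂.natAbs
  obtain ⟨p, hpc, hph, hpl, hpR, hplen⟩ := hP n₁ hn₁
  rw [hr] at hpR hplen
  have hp : IsCayleyPathOutside S (2 * r) (a₀ ^ (4 * n₁)) (aₘ * a₀ ^ (4 * n₁)) p :=
    ⟨hpc, hph, hpl, hpR⟩
  have hlen_inv (i : ℕ) : wordLength S (aₘ ^ i)⁻¹ = i := by simpa using hlcool (-i) 0
  have hlen₀ (k : ℤ) : wordLength S (a₀ ^ k) = k.natAbs := by simpa using hlcool 0 k
  obtain ⟨mid, hmid, hmidlen⟩ :=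
    exists_isCayleyPathOutside_pow_mul hgen hp (R' := r) (by omega) r
      fun i hi => by rw [hlen_inv]; omega
  obtain ⟨first, hfirst, hfirstlen⟩ :=
    exists_isCayleyPathOutside_mul_zpow (R := r) ha₀ 1 n₁ (4 * n₁)
      fun k hk => by rw [one_mul, hlen₀]; rw [Set.mem_uIcc] at hk; omega
  obtain ⟨last, hlast, hlastlen⟩ :=
    exists_isCayleyPathOutside_mul_zpow (R := r) ha₀ (aₘ ^ n₂) (4 * n₁) 0
      fun k _ => by rw [hlcool]; omega
  have hr₂ : aₘ ^ r = aₘ ^ n₂ := by rw [← zpow_natCast, Int.natAbs_of_nonneg hn₂.le]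
  rw [hr₂] at hmid
  simp only [one_mul, zpow_zero, mul_one] at hfirst hlast
  have hpath := (hfirst.append hmid).append hlast
  refine ⟨_, hpath.1, hpath.2.1, hpath.2.2.1, hpath.2.2.2, ?_⟩
  have hlen : (first ++ mid.tail ++ last.tail).length - 1 = 7 * r + r * (p.length - 1) := by
    rw [(hfirst.append hmid).length_append, hfirst.length_append, hfirstlen, hmidlen, hlastlen]
    omega
  have hB : 0 ≤ M * (r : ℝ) ^ (m - 2) * (f (M * r) + 1) :=
    (sub_nonneg.mpr (by exact_mod_cast List.length_pos_iff.mpr hp.ne_nil)).trans hplen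
  have hr₀ : (0 : ℝ) < r := by positivity
  calc ((first ++ mid.tail ++ last.tail).length : ℝ) - 1
      = 7 * r + r * ((p.length : ℝ) - 1) := by
        rw [← hpath.cast_length_sub_one, hlen, ← hp.cast_length_sub_one]; push_cast; ring
    _ ≤ 7 * r + r * (M * (2 * r) ^ (m - 2) * (f (2 * M * r) + 1)) := by
        gcongr
        exact hplen.trans (mul_pow_mul_le_two_mul hfmono (by positivity) hr₀ _ hB)
    _ = _ := by ring

/-- Quantitative core of the implication `(P_m) ⟹ (Q_m)`: if for every nonzero `n` with
`|n| = r` there is a path connecting `a₀^{4n}` to `a_m·a₀^{4n}` outside `B(e, 2r)` of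
length at most `M·r^{m-2}·(f(Mr)+1)`, then for nonzero `n₁, n₂` with `|n₁| = |n₂| = r`
and `n₂ > 0` there is a path connecting `a₀^{n₁}` to `a_m^{n₂}` outside `B(e, r)` of
length at most `r·M·(2r)^{m-2}·(f(2Mr)+1) + 7r`. -/
theorem P_implies_Q {G : Type*} [Group G]
    (S : Set G) (hSfin : S.Finite) (hgen : Subgroup.closure S = ⊤)
    (a₀ aₘ : G) (ha₀ : a₀ ∈ S) (haₘ : aₘ ∈ S)
    (m : ℕ) (hm : 2 ≤ m) (M : ℝ) (hM : 1 ≤ M)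
    (f : ℝ → ℝ) (hfmono : ∀ x y : ℝ, 0 < x → x ≤ y → f x ≤ f y)
    (hfle : ∀ x : ℝ, 0 < x → f x ≤ x)
    (hlcool : ∀ i j : ℤ, wordLength S (aₘ ^ i * a₀ ^ j) = i.natAbs + j.natAbs)
    (hP : ∀ n : ℤ, n ≠ 0 →
      ∃ l : List G, l.Chain' (CayleyAdj S) ∧
        l.head? = some (a₀ ^ (4 * n)) ∧ l.getLast? = some (aₘ * a₀ ^ (4 * n)) ∧
        (∀ x ∈ l, 2 * n.natAbs ≤ wordLength S x) ∧
        ((l.length : ℝ) - 1 ≤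
          M * (n.natAbs : ℝ) ^ (m - 2) * (f (M * n.natAbs) + 1))) :
    ∀ n₁ n₂ : ℤ, n₁ ≠ 0 → 0 < n₂ → n₁.natAbs = n₂.natAbs →
      ∃ l : List G, l.Chain' (CayleyAdj S) ∧
        l.head? = some (a₀ ^ n₁) ∧ l.getLast? = some (aₘ ^ n₂) ∧
        (∀ x ∈ l, n₂.natAbs ≤ wordLength S x) ∧
        ((l.length : ℝ) - 1 ≤
          (n₂.natAbs : ℝ) * M * (2 * (n₂.natAbs : ℝ)) ^ (m - 2) *
            (f (2 * M * n₂.natAbs) + 1) + 7 * (n₂.natAbs : ℝ)) :=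
  P_implies_Q_general S hgen a₀ aₘ ha₀ m M hM f hfmono hlcool hP
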